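/- For every integer n ≥ 2 with n ≤ 1/γ (so γn ≤ 1), and κ_n = log₂(2φ(n)^{−1}(1+φ(n)))/log₂((1−γ)^{−1}) with φ(n) ∈ (0,1] and γ ∈ (0,1/2): κ_n ≥ log₂(2(1+φ(n)))/log₂(n/(n−1)), and hence 2(1+φ(n))·(n−1)^{κ_n} ≤ n^{κ_n}. -/

import Mathlib

open Real

theorem weakly_balanced_case1_inequality (γ φ : ℝ) (hγ0 : 0 < γ) (hγ : γ < 1 / 2)
    (hφ0 : 0 < φ) (hφ1 : φ ≤ 1) (n : ℕ) (hn : 2 ≤ n) (hnγ : (n : ℝ) ≤ γ⁻¹) :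
    let κ := Real.logb 2 (2 * φ⁻¹ * (1 + φ)) / Real.logb 2 (1 - γ)⁻¹
    Real.logb 2 (2 * (1 + φ)) / Real.logb 2 ((n : ℝ) / ((n : ℝ) - 1)) ≤ κ ∧
    2 * (1 + φ) * ((n : ℝ) - 1) ^ κ ≤ (n : ℝ) ^ κ := by
  intro κ
  have hn2 : (2:ℝ) ≤ (n:ℝ) := by exact_mod_cast hn
  have hn1 : (1:ℝ) ≤ (n:ℝ) - 1 := by linarith
  have hn1pos : (0:ℝ) < (n:ℝ) - 1 := by linarith
  have hnpos : (0:ℝ) < (n:ℝ) := by linarith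
  have hγ1 : γ < 1 := by linarith
  have h1γpos : (0:ℝ) < 1 - γ := by linarith
  have hγn : γ ≤ (n:ℝ)⁻¹ := by
    have := inv_anti₀ hnpos hnγ
    rwa [inv_inv] at this
  have hfrac : ((n:ℝ) - 1) / (n:ℝ) ≤ 1 - γ := by
    have h : ((n:ℝ) - 1) / (n:ℝ) = 1 - (n:ℝ)⁻¹ := by field_simp
    rw [h]; linarith
  have hb : (1 - γ)⁻¹ ≤ (n:ℝ) / ((n:ℝ) - 1) := by
    have := inv_anti₀ (by positivity) hfrac
    rwa [inv_div] at this
  have hb1 : 1 < (1 - γ)⁻¹ := (one_lt_inv₀ h1γpos).2 (by linarith)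
  have hq1 : 1 < (n:ℝ) / ((n:ℝ) - 1) := (one_lt_div hn1pos).2 (by linarith)
  have hdpos : 0 < Real.logb 2 (1 - γ)⁻¹ := Real.logb_pos one_lt_two hb1
  have hqpos : 0 < Real.logb 2 ((n:ℝ) / ((n:ℝ) - 1)) := Real.logb_pos one_lt_two hq1
  have hden : Real.logb 2 (1 - γ)⁻¹ ≤ Real.logb 2 ((n:ℝ) / ((n:ℝ) - 1)) :=
    Real.logb_le_logb_of_le one_lt_two (by positivity) hb
  have hφinv : (1:ℝ) ≤ φ⁻¹ := (one_le_inv₀ hφ0).2 hφ1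
  have hA0 : (0:ℝ) < 2 * (1 + φ) := by nlinarith
  have hnum : Real.logb 2 (2 * (1 + φ)) ≤ Real.logb 2 (2 * φ⁻¹ * (1 + φ)) := by
    apply Real.logb_le_logb_of_le one_lt_two hA0
    nlinarith
  have hnum0 : 0 ≤ Real.logb 2 (2 * (1 + φ)) := by
    apply Real.logb_nonneg one_lt_two; nlinarith
  have hfirst : Real.logb 2 (2 * (1 + φ)) / Real.logb 2 ((n:ℝ) / ((n:ℝ) - 1)) ≤ κ :=
    div_le_div₀ (le_trans hnum0 hnum) hnum hdpos hden
  refine ⟨hfirst, ?_⟩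
  have key : Real.logb 2 (2 * (1 + φ)) ≤ κ * Real.logb 2 ((n:ℝ) / ((n:ℝ) - 1)) :=
    (div_le_iff₀ hqpos).mp hfirst
  have hAeq : 2 * (1 + φ) = (2:ℝ) ^ Real.logb 2 (2 * (1 + φ)) :=
    (Real.rpow_logb two_pos (by norm_num) hA0).symm
  have hQeq : ((n:ℝ) / ((n:ℝ) - 1)) ^ κ = (2:ℝ) ^ (κ * Real.logb 2 ((n:ℝ) / ((n:ℝ) - 1))) := by
    rw [mul_comm, Real.rpow_mul (by norm_num), Real.rpow_logb two_pos (by norm_num) (by positivity)]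
  have h2 : 2 * (1 + φ) ≤ ((n:ℝ) / ((n:ℝ) - 1)) ^ κ := by
    rw [hAeq, hQeq]
    exact Real.rpow_le_rpow_left_iff one_lt_two |>.2 key
  rw [Real.div_rpow (le_of_lt hnpos) (le_of_lt hn1pos)] at h2
  have hpow : (0:ℝ) < ((n:ℝ) - 1) ^ κ := Real.rpow_pos_of_pos hn1pos κ
  calc 2 * (1 + φ) * ((n:ℝ) - 1) ^ κ ≤ ((n:ℝ) ^ κ / ((n:ℝ) - 1) ^ κ) * ((n:ℝ) - 1) ^ κ := by
        exact mul_le_mul_of_nonneg_right h2 (le_of_lt hpow)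
    _ = (n:ℝ) ^ κ := by field_simp
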